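/- arXiv:1602.05084 — 4 statements merged into one kernel-verified Lean document; each statement's English description precedes it below -/
import Mathlib

section
/- Suppose λ > 0 is an eigenvalue of the integral operator A_R with continuous eigenfunction e. Then e is twice continuously differentiable on [0,1] and satisfies the differential equation λ e″(t) = −e(t) − g″(t)·∫₀¹ g(s) e(s) ds for all t ∈ [0,1], together with the boundary conditions e(0) = 0 and λ e′(1) = −g′(1)·∫₀¹ g(s) e(s) ds. -/
open Set intervalIntegral MeasureTheory

/-!
Splitting the kernel at `s = t` turns the eigenvalue equation into
`λ e(t) = ∫₀ᵗ s e(s) ds + t ∫ₜ¹ e(s) ds - g(t) c` with `c = ∫₀¹ g e`. The right-hand side is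
differentiable with derivative `∫ₜ¹ e - g'(t) c`, and that once more with derivative
`-e(t) - g''(t) c`. Evaluating the representation at `t = 0` and its derivative at `t = 1`
gives the boundary conditions.
-/

theorem ContinuousOn.exists_continuous_eqOn_Icc {α β : Type*} [LinearOrder α] [TopologicalSpace α]
    [OrderTopology α] [TopologicalSpace β] {a b : α} {f : α → β} (hab : a ≤ b)
    (hf : ContinuousOn f (Icc a b)) : ∃ F : α → β, Continuous F ∧ EqOn F f (Icc a b) :=
  ⟨IccExtend hab ((Icc a b).domRestrict f), continuous_IccExtend_iff.2 hf.domRestrict,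
    fun _ hx ↦ IccExtend_of_mem hab _ hx⟩

theorem integral_min_mul_eq {f : ℝ → ℝ} {a b t : ℝ} (hat : a ≤ t) (htb : t ≤ b)
    (hf : IntervalIntegrable f volume a b) :
    ∫ s in a..b, min t s * f s = (∫ s in a..t, s * f s) + t * ∫ s in t..b, f s := by
  have hsub_left : uIcc a t ⊆ uIcc a b := uIcc_subset_uIcc_left (Icc_subset_uIcc ⟨hat, htb⟩)
  have hsub_right : uIcc t b ⊆ uIcc a b := uIcc_subset_uIcc_right (Icc_subset_uIcc ⟨hat, htb⟩)
  have hmin : IntervalIntegrable (fun s ↦ min t s * f s) volume a b :=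
    hf.continuousOn_mul (continuous_const.min continuous_id').continuousOn
  rw [← integral_add_adjacent_intervals (hmin.mono_set hsub_left) (hmin.mono_set hsub_right),
    ← intervalIntegral.integral_const_mul]
  congr 1 <;> refine integral_congr fun s hs ↦ ?_
  · rw [uIcc_of_le hat] at hs
    simp only [min_eq_right hs.2]
  · rw [uIcc_of_le htb] at hs
    simp only [min_eq_left hs.1]

theorem hasDerivAt_integral_mul_add_mul_integral {f : ℝ → ℝ} (hf : Continuous f) (a b t : ℝ) :
    HasDerivAt (fun t ↦ (∫ s in a..t, s * f s) + t * ∫ s in t..b, f s) (∫ s in t..b, f s) t := by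
  have hleft : HasDerivAt (fun t ↦ ∫ s in t..b, f s) (-f t) t :=
    integral_hasDerivAt_left (hf.intervalIntegrable _ _) (hf.stronglyMeasurableAtFilter _ _)
      hf.continuousAt
  have hright : HasDerivAt (fun t ↦ ∫ s in a..t, s * f s) (t * f t) t :=
    ((continuous_id.mul hf).integral_hasStrictDerivAt a t).hasDerivAt
  exact (hright.add ((hasDerivAt_id' t).mul hleft)).congr_deriv (by ring)

theorem integral_min_sub_mul_mul_eq {f g : ℝ → ℝ} {a b t : ℝ} (hat : a ≤ t) (htb : t ≤ b)
    (hf : IntervalIntegrable f volume a b) (hgf : IntervalIntegrable (fun s ↦ g s * f s) volume a b) :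
    ∫ s in a..b, (min t s - g t * g s) * f s =
      (∫ s in a..t, s * f s) + t * (∫ s in t..b, f s) - g t * ∫ s in a..b, g s * f s := by
  simp only [sub_mul, mul_assoc]
  rw [integral_sub (hf.continuousOn_mul (continuous_const.min continuous_id').continuousOn)
    (hgf.const_mul _), intervalIntegral.integral_const_mul, integral_min_mul_eq hat htb hf]

theorem stmt1_general (g g' g'' : ℝ → ℝ)
    (hg1 : ∀ t ∈ Set.Icc (0:ℝ) 1, HasDerivWithinAt g (g' t) (Set.Icc 0 1) t)
    (hg2 : ∀ t ∈ Set.Icc (0:ℝ) 1, HasDerivWithinAt g' (g'' t) (Set.Icc 0 1) t)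
    (hg2c : ContinuousOn g'' (Set.Icc 0 1))
    (hg0 : g 0 = 0)
    (lam : ℝ) (hlam : 0 < lam) (e : ℝ → ℝ)
    (he_cont : ContinuousOn e (Set.Icc 0 1))
    (heig : ∀ t ∈ Set.Icc (0:ℝ) 1,
      (∫ s in (0:ℝ)..1, (min t s - g t * g s) * e s) = lam * e t) :
    ∃ e' e'' : ℝ → ℝ,
      (∀ t ∈ Set.Icc (0:ℝ) 1, HasDerivWithinAt e (e' t) (Set.Icc 0 1) t) ∧
      (∀ t ∈ Set.Icc (0:ℝ) 1, HasDerivWithinAt e' (e'' t) (Set.Icc 0 1) t) ∧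
      ContinuousOn e'' (Set.Icc 0 1) ∧
      (∀ t ∈ Set.Icc (0:ℝ) 1,
        lam * e'' t = - e t - g'' t * ∫ s in (0:ℝ)..1, g s * e s) ∧
      e 0 = 0 ∧
      lam * e' 1 = - g' 1 * ∫ s in (0:ℝ)..1, g s * e s := by
  -- Extending `e` continuously past `[0, 1]` makes the FTC available at the endpoints.
  obtain ⟨ē, hē, hēe⟩ := he_cont.exists_continuous_eqOn_Icc zero_le_one
  have hēe' : EqOn ē e (uIcc 0 1) := by rwa [uIcc_of_le zero_le_one]
  have hg : ContinuousOn g (Icc 0 1) := fun t ht ↦ (hg1 t ht).continuousWithinAt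
  set c := ∫ s in (0:ℝ)..1, g s * e s
  have hc : ∫ s in (0:ℝ)..1, g s * ē s = c := integral_congr fun s hs ↦ by simp only [hēe' hs]
  have hrepr : ∀ t ∈ Icc (0:ℝ) 1,
      e t = ((∫ s in 0..t, s * ē s) + t * (∫ s in t..1, ē s) - g t * c) / lam := by
    intro t ht
    rw [eq_div_iff hlam.ne', mul_comm, ← heig t ht, ← hc, ← integral_min_sub_mul_mul_eq ht.1 ht.2
      (hē.intervalIntegrable 0 1) ((hg.mul hē.continuousOn).intervalIntegrable_of_Icc zero_le_one)]
    exact integral_congr fun s hs ↦ by simp only [hēe' hs]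
  have hintegral_right : ∀ t, HasDerivAt (fun t ↦ ∫ s in t..1, ē s) (-ē t) t := fun t ↦
    integral_hasDerivAt_left (hē.intervalIntegrable _ _) (hē.stronglyMeasurableAtFilter _ _)
      hē.continuousAt
  refine ⟨fun t ↦ ((∫ s in t..1, ē s) - g' t * c) / lam, fun t ↦ (-ē t - g'' t * c) / lam,
    fun t ht ↦ ?_, fun t ht ↦ ?_, ?_, fun t ht ↦ ?_, ?_, ?_⟩
  · exact (((hasDerivAt_integral_mul_add_mul_integral hē 0 1 t).hasDerivWithinAt.sub
      ((hg1 t ht).mul_const c)).div_const lam).congr hrepr (hrepr t ht)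
  · exact ((hintegral_right t).hasDerivWithinAt.sub ((hg2 t ht).mul_const c)).div_const lam
  · exact (hē.continuousOn.neg.sub (hg2c.mul continuousOn_const)).div_const lam
  · rw [mul_div_cancel₀ _ hlam.ne', hēe ht]
  · simpa [hg0] using hrepr 0 ⟨le_rfl, zero_le_one⟩
  · simp [mul_div_cancel₀ _ hlam.ne']

/-- If `λ > 0` is an eigenvalue of the integral operator with kernel
`R(s,t) = min(s,t) - g(s)g(t)` with continuous eigenfunction `e`, then `e` is twice
continuously differentiable on `[0,1]` and satisfies
`λ e'' (t) = -e(t) - g''(t) ∫₀¹ g(s) e(s) ds` with boundary conditions `e(0) = 0` and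
`λ e'(1) = -g'(1) ∫₀¹ g(s) e(s) ds`. -/
theorem stmt1 (g g' g'' : ℝ → ℝ)
    (hg1 : ∀ t ∈ Set.Icc (0:ℝ) 1, HasDerivWithinAt g (g' t) (Set.Icc 0 1) t)
    (hg2 : ∀ t ∈ Set.Icc (0:ℝ) 1, HasDerivWithinAt g' (g'' t) (Set.Icc 0 1) t)
    (hg2c : ContinuousOn g'' (Set.Icc 0 1))
    (hg0 : g 0 = 0)
    (hgnorm : ∫ u in (0:ℝ)..1, (g' u) ^ 2 = 1)
    (lam : ℝ) (hlam : 0 < lam) (e : ℝ → ℝ)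
    (he_cont : ContinuousOn e (Set.Icc 0 1))
    (he_ne : ∃ t ∈ Set.Icc (0:ℝ) 1, e t ≠ 0)
    (heig : ∀ t ∈ Set.Icc (0:ℝ) 1,
      (∫ s in (0:ℝ)..1, (min t s - g t * g s) * e s) = lam * e t) :
    ∃ e' e'' : ℝ → ℝ,
      (∀ t ∈ Set.Icc (0:ℝ) 1, HasDerivWithinAt e (e' t) (Set.Icc 0 1) t) ∧
      (∀ t ∈ Set.Icc (0:ℝ) 1, HasDerivWithinAt e' (e'' t) (Set.Icc 0 1) t) ∧
      ContinuousOn e'' (Set.Icc 0 1) ∧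
      (∀ t ∈ Set.Icc (0:ℝ) 1,
        lam * e'' t = - e t - g'' t * ∫ s in (0:ℝ)..1, g s * e s) ∧
      e 0 = 0 ∧
      lam * e' 1 = - g' 1 * ∫ s in (0:ℝ)..1, g s * e s :=
  stmt1_general g g' g'' hg1 hg2 hg2c hg0 lam hlam e he_cont heig
end

section
/- Suppose λ ∈ ℝ and e : [0,1] → ℝ is a twice continuously differentiable function, not identically zero, satisfying λ e″(t) = −e(t) − g″(t)·∫₀¹ g(s) e(s) ds for all t ∈ [0,1], together with the boundary conditions e(0) = 0 and λ e′(1) = −g′(1)·∫₀¹ g(s) e(s) ds. Then ∫₀¹ R(t,s) e(s) ds = λ e(t) for all t ∈ [0,1], i.e., λ is an eigenvalue of the integral operator A_R with eigenfunction e. -/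
open Real Set intervalIntegral
open MeasureTheory (volume)

/-!
With `c = ∫₀¹ g e`, the function `u = λ e + c g` satisfies `-u'' = e`, `u 0 = 0` and `u' 1 = 0`.
For these boundary conditions `min t s` is the Green kernel of `-d²/ds²`: splitting at `s = t`
and integrating by parts gives `∫₀¹ min t s * u'' s = t u'(1) - u t + u 0`, so
`∫₀¹ min t s * e s = u t = λ e t + c g t`.
-/

theorem intervalIntegral.integral_eq_sub_of_hasDerivWithinAt_Icc {f f' : ℝ → ℝ} {a b : ℝ}
    (hab : a ≤ b) (hf : ∀ x ∈ Icc a b, HasDerivWithinAt f (f' x) (Icc a b) x)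
    (hint : IntervalIntegrable f' volume a b) :
    ∫ x in a..b, f' x = f b - f a :=
  integral_eq_sub_of_hasDerivAt_of_le hab (fun x hx ↦ (hf x hx).continuousWithinAt)
    (fun x hx ↦ (hf x (Ioo_subset_Icc_self hx)).hasDerivAt (Icc_mem_nhds hx.1 hx.2)) hint

theorem intervalIntegral.integral_min_mul_of_hasDerivWithinAt {u u' u'' : ℝ → ℝ} {b t : ℝ}
    (hu : ∀ x ∈ Icc 0 b, HasDerivWithinAt u (u' x) (Icc 0 b) x)
    (hu' : ∀ x ∈ Icc 0 b, HasDerivWithinAt u' (u'' x) (Icc 0 b) x)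
    (hu'' : IntervalIntegrable u'' volume 0 b) (ht : t ∈ Icc 0 b) :
    ∫ s in 0..b, min t s * u'' s = t * u' b - u t + u 0 := by
  have hsub₁ : Icc 0 t ⊆ Icc 0 b := Icc_subset_Icc le_rfl ht.2
  have hsub₂ : Icc t b ⊆ Icc 0 b := Icc_subset_Icc ht.1 le_rfl
  have hint₁ : IntervalIntegrable u'' volume 0 t :=
    hu''.mono_set (by rwa [uIcc_of_le ht.1, uIcc_of_le (ht.1.trans ht.2)])
  have hint₂ : IntervalIntegrable u'' volume t b :=
    hu''.mono_set (by rwa [uIcc_of_le ht.2, uIcc_of_le (ht.1.trans ht.2)])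
  have hu'c : ContinuousOn u' (Icc 0 b) := fun x hx ↦ (hu' x hx).continuousWithinAt
  have below : ∫ s in 0..t, min t s * u'' s = t * u' t - (u t - u 0) := by
    have hid : ∀ x ∈ uIcc 0 t, HasDerivWithinAt id 1 (uIcc 0 t) x :=
      fun x _ ↦ hasDerivWithinAt_id x _
    have hu'₁ : ∀ x ∈ uIcc 0 t, HasDerivWithinAt u' (u'' x) (uIcc 0 t) x := by
      rw [uIcc_of_le ht.1]
      exact fun x hx ↦ (hu' x (hsub₁ hx)).mono hsub₁
    rw [integral_congr (g := fun s ↦ id s * u'' s) fun s hs ↦ by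
          rw [uIcc_of_le ht.1] at hs; simp [min_eq_right hs.2],
      integral_mul_deriv_eq_deriv_mul_of_hasDerivWithinAt hid hu'₁ intervalIntegrable_const hint₁]
    simp only [id, one_mul, zero_mul, sub_zero]
    rw [integral_eq_sub_of_hasDerivWithinAt_Icc ht.1 (fun x hx ↦ (hu x (hsub₁ hx)).mono hsub₁)
        ((hu'c.mono hsub₁).intervalIntegrable_of_Icc ht.1)]
  have above : ∫ s in t..b, min t s * u'' s = t * (u' b - u' t) := by
    rw [integral_congr (g := fun s ↦ t * u'' s) fun s hs ↦ by
          rw [uIcc_of_le ht.2] at hs; simp [min_eq_left hs.1],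
      integral_const_mul,
      integral_eq_sub_of_hasDerivWithinAt_Icc ht.2 (fun x hx ↦ (hu' x (hsub₂ hx)).mono hsub₂) hint₂]
  have hmin : Continuous (fun s ↦ min t s) := continuous_const.min continuous_id
  rw [← integral_add_adjacent_intervals (hint₁.continuousOn_mul hmin.continuousOn)
    (hint₂.continuousOn_mul hmin.continuousOn), below, above]
  ring

theorem stmt2_general (g g' g'' : ℝ → ℝ)
    (hg1 : ∀ t ∈ Set.Icc (0:ℝ) 1, HasDerivWithinAt g (g' t) (Set.Icc 0 1) t)
    (hg2 : ∀ t ∈ Set.Icc (0:ℝ) 1, HasDerivWithinAt g' (g'' t) (Set.Icc 0 1) t)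
    (hg0 : g 0 = 0)
    (lam : ℝ) (e e' e'' : ℝ → ℝ)
    (he1 : ∀ t ∈ Set.Icc (0:ℝ) 1, HasDerivWithinAt e (e' t) (Set.Icc 0 1) t)
    (he2 : ∀ t ∈ Set.Icc (0:ℝ) 1, HasDerivWithinAt e' (e'' t) (Set.Icc 0 1) t)
    (hODE : ∀ t ∈ Set.Icc (0:ℝ) 1,
      lam * e'' t = - e t - g'' t * ∫ s in (0:ℝ)..1, g s * e s)
    (hBC0 : e 0 = 0)
    (hBC1 : lam * e' 1 = - g' 1 * ∫ s in (0:ℝ)..1, g s * e s) :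
    ∀ t ∈ Set.Icc (0:ℝ) 1,
      (∫ s in (0:ℝ)..1, (min t s - g t * g s) * e s) = lam * e t := by
  intro t ht
  set c := ∫ s in (0:ℝ)..1, g s * e s
  have hu : ∀ x ∈ Icc (0:ℝ) 1,
      HasDerivWithinAt (fun s ↦ lam * e s + c * g s) (lam * e' x + c * g' x) (Icc 0 1) x :=
    fun x hx ↦ ((he1 x hx).const_mul lam).add ((hg1 x hx).const_mul c)
  have hu' : ∀ x ∈ Icc (0:ℝ) 1,
      HasDerivWithinAt (fun s ↦ lam * e' s + c * g' s) (-e x) (Icc 0 1) x := by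
    intro x hx
    refine (((he2 x hx).const_mul lam).add ((hg2 x hx).const_mul c)).congr_deriv ?_
    linarith [hODE x hx]
  have hec : ContinuousOn e (Icc 0 1) := fun x hx ↦ (he1 x hx).continuousWithinAt
  have hge : IntervalIntegrable (fun s ↦ g s * e s) volume 0 1 :=
    ((ContinuousOn.mul (fun x hx ↦ (hg1 x hx).continuousWithinAt) hec).intervalIntegrable_of_Icc
      zero_le_one)
  have hmin : IntervalIntegrable (fun s ↦ min t s * e s) volume 0 1 :=
    ((continuous_const.min continuous_id).continuousOn.mul hec).intervalIntegrable_of_Icc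
      zero_le_one
  have green := integral_min_mul_of_hasDerivWithinAt hu hu'
    (hec.neg.intervalIntegrable_of_Icc zero_le_one) ht
  have hu'1 : lam * e' 1 + c * g' 1 = 0 := by linarith
  simp only [mul_neg, integral_neg, hu'1, hBC0, hg0] at green
  have hsplit : ∫ s in (0:ℝ)..1, (min t s - g t * g s) * e s
      = (∫ s in (0:ℝ)..1, min t s * e s) - g t * c := by
    simp only [sub_mul, mul_assoc]
    rw [integral_sub hmin (hge.const_mul _), integral_const_mul]
  rw [hsplit]
  linarith

/-- Converse direction: if `λ` and a twice continuously differentiable `e`, not identically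
zero, satisfy `λ e''(t) = -e(t) - g''(t) ∫₀¹ g(s) e(s) ds` with `e(0) = 0` and
`λ e'(1) = -g'(1) ∫₀¹ g(s) e(s) ds`, then `λ` is an eigenvalue of the integral operator
with kernel `R(s,t) = min(s,t) - g(s)g(t)`, with eigenfunction `e`. -/
theorem stmt2 (g g' g'' : ℝ → ℝ)
    (hg1 : ∀ t ∈ Set.Icc (0:ℝ) 1, HasDerivWithinAt g (g' t) (Set.Icc 0 1) t)
    (hg2 : ∀ t ∈ Set.Icc (0:ℝ) 1, HasDerivWithinAt g' (g'' t) (Set.Icc 0 1) t)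
    (hg2c : ContinuousOn g'' (Set.Icc 0 1))
    (hg0 : g 0 = 0)
    (hgnorm : ∫ u in (0:ℝ)..1, (g' u) ^ 2 = 1)
    (lam : ℝ) (e e' e'' : ℝ → ℝ)
    (he1 : ∀ t ∈ Set.Icc (0:ℝ) 1, HasDerivWithinAt e (e' t) (Set.Icc 0 1) t)
    (he2 : ∀ t ∈ Set.Icc (0:ℝ) 1, HasDerivWithinAt e' (e'' t) (Set.Icc 0 1) t)
    (he2c : ContinuousOn e'' (Set.Icc 0 1))
    (he_ne : ∃ t ∈ Set.Icc (0:ℝ) 1, e t ≠ 0)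
    (hODE : ∀ t ∈ Set.Icc (0:ℝ) 1,
      lam * e'' t = - e t - g'' t * ∫ s in (0:ℝ)..1, g s * e s)
    (hBC0 : e 0 = 0)
    (hBC1 : lam * e' 1 = - g' 1 * ∫ s in (0:ℝ)..1, g s * e s) :
    ∀ t ∈ Set.Icc (0:ℝ) 1,
      (∫ s in (0:ℝ)..1, (min t s - g t * g s) * e s) = lam * e t :=
  stmt2_general g g' g'' hg1 hg2 hg0 lam e e' e'' he1 he2 hODE hBC0 hBC1
end

section
/- Let R₁(s,t) := min(s,t) − s·t for s,t ∈ [0,1] (the covariance of the Wiener bridge Y_t = B_t − t·B₁). Then a real number λ > 0 is an eigenvalue of the integral operator A_{R₁} if and only if sin(1/√λ) = 0, i.e., if and only if λ = 1/(k²π²) for some positive integer k. -/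
/-!
On `[0, 1]`, `u t = ∫ s in 0..1, R₁(t, s) e(s)` solves `u'' = -e`, `u 0 = u 1 = 0`: `R₁` is the
Green function of `-d²/dt²` with Dirichlet conditions. So an eigenfunction for `λ = ω⁻²` solves
`e'' = -ω² e` with `e 0 = e 1 = 0`. Conservation of the energy `e'² + ω² e²` makes it a multiple
of `sin (ω t)`, which vanishes at `1` and is nonzero only if `sin ω = 0`. Conversely, when
`sin ω = 0`, integrating `R₁(t, s) sin (ω s)` explicitly shows that `sin (ω t)` is an
eigenfunction.
-/

open Real Set intervalIntegral

/-- `R₁(s,t) = min(s,t) - s t`, the covariance of the Wiener bridge. -/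
noncomputable def ROne (s t : ℝ) : ℝ := min s t - s * t

theorem eq_zero_of_harmonic {y y' : ℝ → ℝ} {ω b : ℝ} (hω : ω ≠ 0)
    (hy : ∀ t ∈ Icc 0 b, HasDerivAt y (y' t) t)
    (hy' : ∀ t ∈ Icc 0 b, HasDerivAt y' (-(ω ^ 2 * y t)) t)
    (h₀ : y 0 = 0) (h₀' : y' 0 = 0) : ∀ t ∈ Icc 0 b, y t = 0 := by
  set E := fun t => y' t ^ 2 + ω ^ 2 * y t ^ 2
  have hE : ∀ t ∈ Icc 0 b, HasDerivAt E 0 t := fun t ht =>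
    (((hy' t ht).pow 2).add (((hy t ht).pow 2).const_mul _)).congr_deriv (by ring)
  have hE_const := constant_of_has_deriv_right_zero
    (fun t ht => (hE t ht).continuousAt.continuousWithinAt)
    fun t ht => (hE t (Ico_subset_Icc_self ht)).hasDerivWithinAt
  intro t ht
  have hEt : y' t ^ 2 + ω ^ 2 * y t ^ 2 = 0 := by
    simpa [E, h₀, h₀'] using hE_const t ht
  have : ω ^ 2 * y t ^ 2 = 0 := by nlinarith [sq_nonneg (y' t), sq_nonneg (y t), sq_nonneg ω]
  simpa [hω] using this

theorem eq_cos_add_sin_of_harmonic {y y' : ℝ → ℝ} {ω b : ℝ} (hω : ω ≠ 0)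
    (hy : ∀ t ∈ Icc 0 b, HasDerivAt y (y' t) t)
    (hy' : ∀ t ∈ Icc 0 b, HasDerivAt y' (-(ω ^ 2 * y t)) t) :
    ∀ t ∈ Icc 0 b, y t = y 0 * cos (ω * t) + y' 0 / ω * sin (ω * t) := by
  have hsin (t : ℝ) : HasDerivAt (fun t => sin (ω * t)) (cos (ω * t) * ω) t :=
    ((hasDerivAt_id' t).const_mul ω).sin.congr_deriv (by ring)
  have hcos (t : ℝ) : HasDerivAt (fun t => cos (ω * t)) (-sin (ω * t) * ω) t :=
    ((hasDerivAt_id' t).const_mul ω).cos.congr_deriv (by ring)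
  have key := eq_zero_of_harmonic (b := b) hω
    (y := fun t => y t - (y 0 * cos (ω * t) + y' 0 / ω * sin (ω * t)))
    (y' := fun t => y' t - (-(y 0 * ω * sin (ω * t)) + y' 0 * cos (ω * t)))
    (fun t ht => ((hy t ht).sub (((hcos t).const_mul _).add ((hsin t).const_mul _))).congr_deriv
      (by field_simp))
    (fun t ht => ((hy' t ht).sub
      (((hsin t).const_mul _).neg.add ((hcos t).const_mul _))).congr_deriv (by field_simp; ring))
    (by simp) (by simp)
  exact fun t ht => sub_eq_zero.1 (key t ht)

theorem integral_sin_mul {ω : ℝ} (hω : ω ≠ 0) (a b : ℝ) :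
    ∫ s in a..b, sin (ω * s) = (cos (ω * a) - cos (ω * b)) / ω := by
  rw [integral_comp_mul_left (fun x => sin x) hω, integral_sin, smul_eq_mul, inv_mul_eq_div]

theorem integral_mul_sin_mul {ω : ℝ} (hω : ω ≠ 0) (a b : ℝ) :
    ∫ s in a..b, s * sin (ω * s) =
      (sin (ω * b) - sin (ω * a)) / ω ^ 2 - (b * cos (ω * b) - a * cos (ω * a)) / ω := by
  have hS (s : ℝ) : HasDerivAt (fun s => sin (ω * s) / ω ^ 2 - s * cos (ω * s) / ω)
      (s * sin (ω * s)) s := by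
    have hin := (hasDerivAt_id' s).const_mul ω
    exact ((hin.sin.div_const _).sub (((hasDerivAt_id' s).mul hin.cos).div_const _)).congr_deriv
      (by field_simp; ring)
  have hc : Continuous fun s => s * sin (ω * s) := by fun_prop
  rw [integral_eq_sub_of_hasDerivAt (fun s _ => hS s) (hc.intervalIntegrable _ _)]
  ring

/-- The closed form of `t ↦ ∫ s in 0..1, ROne t s * f s` on `[0, 1]` (`integral_ROne_mul`);
unlike the integral, it has the derivatives of a solution of `u'' = -f` on all of `ℝ`. -/
noncomputable def rOnePotential (f : ℝ → ℝ) (t : ℝ) : ℝ :=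
  (∫ s in 0..t, s * f s) + t * (∫ s in t..1, f s) - t * ∫ s in 0..1, s * f s

noncomputable def rOnePotentialDeriv (f : ℝ → ℝ) (t : ℝ) : ℝ :=
  (∫ s in t..1, f s) - ∫ s in 0..1, s * f s

theorem rOnePotential_zero (f : ℝ → ℝ) : rOnePotential f 0 = 0 := by
  simp [rOnePotential]

theorem rOnePotential_one (f : ℝ → ℝ) : rOnePotential f 1 = 0 := by
  simp [rOnePotential]

theorem integral_ROne_mul {f : ℝ → ℝ} (hf : Continuous f) {t : ℝ} (ht : t ∈ Icc 0 1) :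
    ∫ s in 0..1, ROne t s * f s = rOnePotential f t := by
  have hmin : Continuous fun s => min t s * f s := by fun_prop
  have hid : Continuous fun s => s * f s := by fun_prop
  have hleft : ∫ s in 0..t, min t s * f s = ∫ s in 0..t, s * f s :=
    integral_congr fun s hs => by
      rw [uIcc_of_le ht.1] at hs
      simp only [min_eq_right hs.2]
  have hright : ∫ s in t..1, min t s * f s = t * ∫ s in t..1, f s := by
    rw [← integral_const_mul]
    refine integral_congr fun s hs => ?_
    rw [uIcc_of_le ht.2] at hs
    simp only [min_eq_left hs.1]
  calc ∫ s in 0..1, ROne t s * f s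
      = (∫ s in 0..1, min t s * f s) - t * ∫ s in 0..1, s * f s := by
        simp only [ROne, sub_mul, mul_assoc]
        rw [integral_sub (g := fun s => t * (s * f s)) (hmin.intervalIntegrable _ _)
          ((continuous_const.mul hid).intervalIntegrable _ _), integral_const_mul]
    _ = rOnePotential f t := by
        rw [← integral_add_adjacent_intervals (hmin.intervalIntegrable 0 t)
          (hmin.intervalIntegrable t 1), hleft, hright, rOnePotential]

theorem hasDerivAt_rOnePotential {f : ℝ → ℝ} (hf : Continuous f) (t : ℝ) :
    HasDerivAt (rOnePotential f) (rOnePotentialDeriv f t) t := by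
  have hid : Continuous fun s => s * f s := by fun_prop
  have hleft := (hid.integral_hasStrictDerivAt 0 t).hasDerivAt
  have hright := integral_hasDerivAt_left (hf.intervalIntegrable t 1)
    hf.stronglyMeasurable.stronglyMeasurableAtFilter hf.continuousAt
  exact ((hleft.add ((hasDerivAt_id t).mul hright)).sub
    ((hasDerivAt_id t).mul_const _)).congr_deriv
      (by simp only [id_eq, rOnePotentialDeriv]; ring)

theorem hasDerivAt_rOnePotentialDeriv {f : ℝ → ℝ} (hf : Continuous f) (t : ℝ) :
    HasDerivAt (rOnePotentialDeriv f) (-f t) t :=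
  (integral_hasDerivAt_left (hf.intervalIntegrable t 1)
    hf.stronglyMeasurable.stronglyMeasurableAtFilter hf.continuousAt).sub_const _

theorem rOnePotential_sin_mul {ω : ℝ} (hω : ω ≠ 0) (hsin : sin ω = 0) (t : ℝ) :
    rOnePotential (fun s => sin (ω * s)) t = sin (ω * t) / ω ^ 2 := by
  simp only [rOnePotential, integral_mul_sin_mul hω, integral_sin_mul hω, mul_one, mul_zero,
    sin_zero, hsin]
  field_simp
  ring

def IsROneEigenfunction (lam : ℝ) (e : ℝ → ℝ) : Prop :=
  ContinuousOn e (Icc 0 1) ∧ (∃ t ∈ Icc (0:ℝ) 1, e t ≠ 0) ∧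
    ∀ t ∈ Icc (0:ℝ) 1, (∫ s in (0:ℝ)..1, ROne t s * e s) = lam * e t

theorem isROneEigenfunction_congr {lam : ℝ} {e f : ℝ → ℝ} (h : EqOn e f (Icc 0 1)) :
    IsROneEigenfunction lam e ↔ IsROneEigenfunction lam f := by
  have hintegral (t : ℝ) :
      ∫ s in (0:ℝ)..1, ROne t s * e s = ∫ s in (0:ℝ)..1, ROne t s * f s :=
    integral_congr fun s hs => by rw [uIcc_of_le zero_le_one] at hs; simp only [h hs]
  unfold IsROneEigenfunction
  refine and_congr (continuousOn_congr h) (and_congr ?_ ?_)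
  · exact exists_congr fun t => and_congr_right fun ht => by rw [h ht]
  · exact forall₂_congr fun t ht => by rw [hintegral, h ht]

theorem IsROneEigenfunction.exists_continuous {lam : ℝ} {e : ℝ → ℝ}
    (he : IsROneEigenfunction lam e) : ∃ f, Continuous f ∧ IsROneEigenfunction lam f := by
  refine ⟨IccExtend zero_le_one ((Icc 0 1).domRestrict e), he.1.domRestrict.Icc_extend', ?_⟩
  exact (isROneEigenfunction_congr fun t ht => IccExtend_of_mem _ _ ht).2 he

theorem isROneEigenfunction_sin_mul {ω : ℝ} (hω : ω ≠ 0) (hsin : sin ω = 0) :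
    IsROneEigenfunction (ω ^ 2)⁻¹ fun t => sin (ω * t) := by
  have hc : Continuous fun t => sin (ω * t) := by fun_prop
  have ht₀ : 0 < min 1 |ω|⁻¹ := by positivity
  refine ⟨hc.continuousOn,
    ⟨min 1 |ω|⁻¹, ⟨ht₀.le, min_le_left _ _⟩, ?_⟩, fun t ht => ?_⟩
  · have habs : |ω * min 1 |ω|⁻¹| ≤ 1 :=
      calc |ω * min 1 |ω|⁻¹| = |ω| * min 1 |ω|⁻¹ := by rw [abs_mul, abs_of_pos ht₀]
        _ ≤ |ω| * |ω|⁻¹ := by gcongr; exact min_le_right _ _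
        _ = 1 := mul_inv_cancel₀ (abs_ne_zero.2 hω)
    obtain ⟨hlo, hhi⟩ := abs_le.1 habs
    rw [Ne, sin_eq_zero_iff_of_lt_of_lt (by linarith [pi_gt_three]) (by linarith [pi_gt_three])]
    exact mul_ne_zero hω ht₀.ne'
  · rw [integral_ROne_mul hc ht, rOnePotential_sin_mul hω hsin, div_eq_inv_mul]

theorem sin_eq_zero_of_isROneEigenfunction {ω : ℝ} (hω : ω ≠ 0) {e : ℝ → ℝ}
    (hc : Continuous e) (he : IsROneEigenfunction (ω ^ 2)⁻¹ e) : sin ω = 0 := by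
  obtain ⟨-, ⟨t₀, ht₀, he₀⟩, heig⟩ := he
  set y := fun t => ω ^ 2 * rOnePotential e t
  set y' := fun t => ω ^ 2 * rOnePotentialDeriv e t
  have hy_eq : ∀ t ∈ Icc 0 1, y t = e t := fun t ht => by
    simp only [y, ← integral_ROne_mul hc ht, heig t ht]
    field_simp
  have hsol := eq_cos_add_sin_of_harmonic (y := y) (y' := y') hω
    (fun t _ => (hasDerivAt_rOnePotential hc t).const_mul _)
    fun t ht => ((hasDerivAt_rOnePotentialDeriv hc t).const_mul _).congr_deriv
      (by rw [hy_eq t ht]; ring)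
  have hy₀ : y 0 = 0 := by simp [y, rOnePotential_zero]
  have hy₁ : y 1 = 0 := by simp [y, rOnePotential_one]
  have hcoef : y' 0 / ω * sin ω = 0 := by
    have h₁ := hsol 1 (right_mem_Icc.2 zero_le_one)
    rwa [hy₀, hy₁, zero_mul, zero_add, mul_one, eq_comm] at h₁
  by_contra hsin
  apply he₀
  rw [← hy_eq t₀ ht₀, hsol t₀ ht₀, hy₀, (mul_eq_zero.1 hcoef).resolve_right hsin]
  ring

theorem exists_isROneEigenfunction_iff {ω : ℝ} (hω : ω ≠ 0) :
    (∃ e, IsROneEigenfunction (ω ^ 2)⁻¹ e) ↔ sin ω = 0 := by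
  constructor
  · rintro ⟨e, he⟩
    obtain ⟨f, hf, hf_eig⟩ := he.exists_continuous
    exact sin_eq_zero_of_isROneEigenfunction hω hf hf_eig
  · exact fun hsin => ⟨_, isROneEigenfunction_sin_mul hω hsin⟩

theorem sin_eq_zero_iff_exists_nat_of_pos {x : ℝ} (hx : 0 < x) :
    sin x = 0 ↔ ∃ k : ℕ, 0 < k ∧ x = k * π := by
  rw [sin_eq_zero_iff]
  constructor
  · rintro ⟨n, rfl⟩
    have hn : 0 < n := by exact_mod_cast pos_of_mul_pos_left hx pi_pos.le
    lift n to ℕ using hn.le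
    exact ⟨n, by exact_mod_cast hn, by norm_cast⟩
  · rintro ⟨k, -, rfl⟩
    exact ⟨k, by norm_cast⟩

theorem sin_one_div_sqrt_eq_zero_iff {lam : ℝ} (hlam : 0 < lam) :
    sin (1 / √lam) = 0 ↔ ∃ k : ℕ, 0 < k ∧ lam = 1 / ((k : ℝ) ^ 2 * π ^ 2) := by
  rw [sin_eq_zero_iff_exists_nat_of_pos (by positivity)]
  refine exists_congr fun k => and_congr_right fun hk => ?_
  have hkπ : 0 < (k : ℝ) * π := by positivity
  rw [one_div, inv_eq_iff_eq_inv, sqrt_eq_iff_eq_sq hlam.le (by positivity), one_div, inv_pow,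
    mul_pow]

/-- A real `λ > 0` is an eigenvalue of the integral operator with kernel `R₁` if and only
if `sin(1/√λ) = 0`, i.e., if and only if `λ = 1/(k²π²)` for some positive integer `k`. -/
theorem stmt9 (lam : ℝ) (hlam : 0 < lam) :
    ((∃ e : ℝ → ℝ, ContinuousOn e (Set.Icc 0 1) ∧
        (∃ t ∈ Set.Icc (0:ℝ) 1, e t ≠ 0) ∧
        ∀ t ∈ Set.Icc (0:ℝ) 1,
          (∫ s in (0:ℝ)..1, ROne t s * e s) = lam * e t)
      ↔ Real.sin (1 / Real.sqrt lam) = 0) ∧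
    ((∃ e : ℝ → ℝ, ContinuousOn e (Set.Icc 0 1) ∧
        (∃ t ∈ Set.Icc (0:ℝ) 1, e t ≠ 0) ∧
        ∀ t ∈ Set.Icc (0:ℝ) 1,
          (∫ s in (0:ℝ)..1, ROne t s * e s) = lam * e t)
      ↔ ∃ k : ℕ, 0 < k ∧ lam = 1 / ((k : ℝ) ^ 2 * Real.pi ^ 2)) := by
  have hlam_eq : ((1 / √lam) ^ 2)⁻¹ = lam := by
    rw [one_div, inv_pow, inv_inv, sq_sqrt hlam.le]
  have key := exists_isROneEigenfunction_iff (ω := 1 / √lam) (by positivity)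
  rw [hlam_eq] at key
  exact ⟨key, key.trans (sin_one_div_sqrt_eq_zero_iff hlam)⟩
end

section
/- Define F₀(λ) := λ^{3/2}·cos(1/√λ) + (2/(π²·(π² − 1/λ)))·sin(1/√λ) for λ > 0, λ ≠ 1/π². Then F₀(λ) > 0 for all λ ∈ (4/π², ∞); in particular, the equation F₀(λ) = 0 has no root greater than 4/π². -/
/-
For `λ > 4/π²` the angle `x = 1/√λ` lies in `(0, π/2)`, so `cos x` and `sin x` are positive, and
`1/λ = x² < π²/4`, so the coefficient `2/(π²(π² - 1/λ))` is positive as well. Both terms of `F₀(λ)`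
are therefore positive.
-/

open Real Set intervalIntegral

/-- `F₀(λ) = λ^{3/2} cos(1/√λ) + (2/(π²(π² - 1/λ))) sin(1/√λ)`. -/
noncomputable def FZero (lam : ℝ) : ℝ :=
  lam * Real.sqrt lam * Real.cos (1 / Real.sqrt lam)
    + 2 / (Real.pi ^ 2 * (Real.pi ^ 2 - 1 / lam)) * Real.sin (1 / Real.sqrt lam)

lemma one_div_lt_pi_sq_div_four {lam : ℝ} (hlam : 4 / π ^ 2 < lam) : 1 / lam < π ^ 2 / 4 := by
  rw [one_div_lt (by linarith [show 0 < 4 / π ^ 2 by positivity]) (by positivity), one_div_div]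
  exact hlam

lemma one_div_sqrt_mem_Ioo {lam : ℝ} (hlam : 4 / π ^ 2 < lam) :
    1 / √lam ∈ Ioo 0 (π / 2) := by
  have hlam0 : 0 < lam := lt_trans (by positivity) hlam
  refine ⟨by positivity, lt_of_pow_lt_pow_left₀ 2 (by positivity) ?_⟩
  calc (1 / √lam) ^ 2 = 1 / lam := by rw [div_pow, one_pow, sq_sqrt hlam0.le]
    _ < π ^ 2 / 4 := one_div_lt_pi_sq_div_four hlam
    _ = (π / 2) ^ 2 := by ring

/-- `F₀(λ) > 0` for all `λ > 4/π²`; in particular `F₀` has no root greater than `4/π²`. -/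
theorem stmt12 : ∀ lam : ℝ, 4 / Real.pi ^ 2 < lam → 0 < FZero lam := by
  intro lam hlam
  have hlam0 : 0 < lam := lt_trans (by positivity) hlam
  obtain ⟨hx0, hx⟩ := one_div_sqrt_mem_Ioo hlam
  have hcos : 0 < cos (1 / √lam) := cos_pos_of_mem_Ioo ⟨by linarith, hx⟩
  have hsin : 0 < sin (1 / √lam) := sin_pos_of_pos_of_lt_pi hx0 (by linarith)
  have hcoeff : 0 < π ^ 2 - 1 / lam := by
    linarith [one_div_lt_pi_sq_div_four hlam, show 0 < π ^ 2 by positivity]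
  unfold FZero
  positivity
end
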